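/- Let V and W be tame persistence modules with barcode bases A (sorted in standard order) and B (sorted in endpoint order), let f: V → W be a persistence morphism with associated matrix F, and let R be a Gaussian column reduction of F. Then the set { 1_{a_i}( ⊞_{j : R_{j,i} ≠ 0} R_{j,i} β_j ) : i = 1,...,N } is a barcode basis for the image f(V); moreover, the interval of the i-th basis element is [a_i, d_{p(i)}), where p(i) is the pivot row of column i and d_{p(i)} the death value of β_{p(i)} (the interval is empty if column i reduces to zero). -/

import Mathlib

noncomputable section

/-- A persistence module over `ℤ/2`. -/
structure PersMod where
  V : ℝ → Type
  [grp : ∀ t, AddCommGroup (V t)]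
  [mod : ∀ t, Module (ZMod 2) (V t)]
  ρ : ∀ s t : ℝ, s ≤ t → V s →ₗ[ZMod 2] V t
  ρ_id : ∀ (t : ℝ) (h : t ≤ t) (x : V t), ρ t t h x = x
  ρ_comp : ∀ (r s t : ℝ) (h1 : r ≤ s) (h2 : s ≤ t) (x : V r),
    ρ s t h2 (ρ r s h1 x) = ρ r t (h1.trans h2) x

attribute [instance] PersMod.grp PersMod.mod

/-- A persistence morphism: a family of linear maps commuting with the structure maps. -/
structure PersHom (M N : PersMod) where
  map : ∀ t : ℝ, M.V t →ₗ[ZMod 2] N.V t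
  comm : ∀ (s t : ℝ) (h : s ≤ t) (x : M.V s), map t (M.ρ s t h x) = N.ρ s t h (map s x)

/-- A barcode basis of the persistence module `M` with intervals `[a i, b i)`, `i : Fin N`:
for each generator a compatible family of vectors living on its interval and dying past it,
whose alive members form a basis of `M.V t` at every `t`. -/
structure BarcodeBasis (M : PersMod) (N : ℕ) (a b : Fin N → ℝ) where
  vec : ∀ (i : Fin N) (t : ℝ), a i ≤ t → t < b i → M.V t
  compat : ∀ (i : Fin N) (s t : ℝ) (hs : a i ≤ s) (h : s ≤ t) (ht : t < b i),
    M.ρ s t h (vec i s hs (lt_of_le_of_lt h ht)) = vec i t (hs.trans h) ht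
  dies : ∀ (i : Fin N) (s : ℝ) (hs : a i ≤ s) (hs' : s < b i) (t : ℝ) (h : s ≤ t),
    b i ≤ t → M.ρ s t h (vec i s hs hs') = 0
  indep : ∀ t : ℝ, LinearIndependent (ZMod 2)
    (fun i : {i : Fin N // a i ≤ t ∧ t < b i} => vec i.1 t i.2.1 i.2.2)
  spans : ∀ t : ℝ, Submodule.span (ZMod 2)
    (Set.range (fun i : {i : Fin N // a i ≤ t ∧ t < b i} => vec i.1 t i.2.1 i.2.2)) = ⊤

/-- Standard order: births increase, and for equal births deaths decrease. -/
def StdOrder {N : ℕ} (a b : Fin N → ℝ) : Prop :=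
  ∀ i j : Fin N, i < j → a i < a j ∨ (a i = a j ∧ b j ≤ b i)

/-- Endpoint order: deaths increase, and for equal deaths births increase. -/
def EndOrder {N : ℕ} (c d : Fin N → ℝ) : Prop :=
  ∀ i j : Fin N, i < j → d i < d j ∨ (d i = d j ∧ c i ≤ c j)

/-- The persistence vector `⊞_j col(j) • β_j` evaluated at time `t` (sum over the
generators of the barcode basis `B` alive at `t`). -/
def colVec (M' : PersMod) (N' : ℕ) (c d : Fin N' → ℝ) (B : BarcodeBasis M' N' c d)
    (col : Fin N' → ZMod 2) (t : ℝ) : M'.V t :=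
  ∑ j : Fin N', if h : c j ≤ t ∧ t < d j then col j • B.vec j t h.1 h.2 else 0

/-!
Column `i` of `R = F U` is the image under `f` of `Σ_k U_{k,i} α_k`, which is alive from `a_i` on
because `U` is upper triangular and births increase along `A`; all nonzero entries of the column
lie in rows born before `a_i` and, deaths increasing along `B`, dying no later than the pivot row
`p i`. So the `i`-th vector lies in the image and lives exactly on `[a_i, d_{p(i)})`. At time `t`
the alive columns have distinct pivots among the alive `β_j`, hence are independent; and they span
the image since `F = R V` with `V` again upper triangular, the columns born but not alive at `t`
being already dead there.
-/

theorem linearIndependent_of_pivot {ι κ R : Type*} [Fintype ι] [LinearOrder κ] [Ring R]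
    [NoZeroDivisors R] (v : ι → κ → R) (q : ι → κ) (hq : Function.Injective q)
    (hpiv : ∀ i, v i (q i) ≠ 0) (hzero : ∀ i k, q i < k → v i k = 0) :
    LinearIndependent R v := by
  classical
  rw [Fintype.linearIndependent_iff]
  intro g hg
  by_contra hne
  obtain ⟨i, hi⟩ := not_forall.1 hne
  obtain ⟨i₀, hi₀, hmax⟩ := ({i | g i ≠ 0} : Finset ι).exists_max_image q ⟨i, by simpa using hi⟩
  rw [Finset.mem_filter_univ] at hi₀
  -- at the highest pivot of the combination only its own column contributes
  have hcoord : ∑ i, g i * v i (q i₀) = g i₀ * v i₀ (q i₀) := by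
    refine Finset.sum_eq_single i₀ (fun i _ hii₀ => ?_) (by simp)
    by_cases hgi : g i = 0
    · rw [hgi, zero_mul]
    · have hlt : q i < q i₀ :=
        lt_of_le_of_ne (hmax i (by simpa using hgi)) (hq.ne hii₀)
      rw [hzero i _ hlt, mul_zero]
  have hsum : ∑ i, g i * v i (q i₀) = 0 := by
    simpa using congrFun hg (q i₀)
  exact mul_ne_zero hi₀ (hpiv i₀) (hcoord ▸ hsum)

theorem StdOrder.monotone {N : ℕ} {a b : Fin N → ℝ} (h : StdOrder a b) : Monotone a := by
  intro i j hij
  rcases hij.eq_or_lt with rfl | hlt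
  · exact le_rfl
  · rcases h i j hlt with h' | h'
    exacts [h'.le, h'.1.le]

theorem EndOrder.monotone {N : ℕ} {c d : Fin N → ℝ} (h : EndOrder c d) : Monotone d := by
  intro i j hij
  rcases hij.eq_or_lt with rfl | hlt
  · exact le_rfl
  · rcases h i j hlt with h' | h'
    exacts [h'.le, h'.1.le]

theorem Matrix.IsUpperTriangular.le_of_ne_zero {n R : Type*} [LinearOrder n] [Zero R]
    {U : Matrix n n R} (hU : U.IsUpperTriangular) {k i : n} (h : U k i ≠ 0) : k ≤ i :=
  not_lt.1 fun hlt => h (hU hlt)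

theorem Matrix.IsUpperTriangular.exists_eq_mul_of_eq_mul {l n K : Type*} [Fintype n]
    [LinearOrder n] [DecidableEq n] [CommRing K] {F R : Matrix l n K} {U : Matrix n n K}
    (hU : U.IsUpperTriangular) (hdiag : ∀ i, U i i = 1) (hR : R = F * U) :
    ∃ V : Matrix n n K, V.IsUpperTriangular ∧ F = R * V := by
  have hdet : IsUnit U.det := by simp [det_of_isUpperTriangular hU, hdiag]
  have := U.invertibleOfIsUnitDet hdet
  exact ⟨U⁻¹, blockTriangular_inv_of_blockTriangular hU, by
    rw [hR, Matrix.mul_assoc, mul_nonsing_inv U hdet, Matrix.mul_one]⟩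

theorem Matrix.exists_ne_zero_of_mul_apply_ne_zero {l m n R : Type*} [Fintype m]
    [NonUnitalNonAssocSemiring R] {F : Matrix l m R} {U : Matrix m n R} {j : l} {i : n}
    (h : (F * U) j i ≠ 0) : ∃ k, F j k ≠ 0 ∧ U k i ≠ 0 := by
  obtain ⟨k, -, hk⟩ := Finset.exists_ne_zero_of_sum_ne_zero h
  exact ⟨k, left_ne_zero_of_mul hk, right_ne_zero_of_mul hk⟩

section colVec

variable {M' : PersMod} {N' : ℕ} {c d : Fin N' → ℝ} (B : BarcodeBasis M' N' c d)

theorem colVec_eq_linearCombination (col : Fin N' → ZMod 2) (t : ℝ) :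
    colVec M' N' c d B col t =
      Fintype.linearCombination (ZMod 2)
        (fun j : {j // c j ≤ t ∧ t < d j} => B.vec j t j.2.1 j.2.2) (fun j => col j) := by
  classical
  rw [Fintype.linearCombination_apply, colVec, Finset.sum_dite, Finset.sum_const_zero, add_zero]
  exact (Equiv.subtypeEquivRight (by simp)).sum_comp
    fun j : {j // c j ≤ t ∧ t < d j} => col j • B.vec j t j.2.1 j.2.2

theorem colVec_congr {col col' : Fin N' → ZMod 2} {t : ℝ}
    (h : ∀ j, c j ≤ t → t < d j → col j = col' j) :
    colVec M' N' c d B col t = colVec M' N' c d B col' t := by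
  simp only [colVec_eq_linearCombination]
  exact congrArg _ (funext fun j => h j j.2.1 j.2.2)

theorem colVec_eq_zero {col : Fin N' → ZMod 2} {t : ℝ} (h : ∀ j, col j ≠ 0 → d j ≤ t) :
    colVec M' N' c d B col t = 0 := by
  have hdead : (fun j : {j // c j ≤ t ∧ t < d j} => col j) = 0 :=
    funext fun j => by_contra fun hj => (h j hj).not_gt j.2.2
  rw [colVec_eq_linearCombination, hdead, map_zero]

theorem colVec_sum_mul {ι : Type*} [Fintype ι] (g : ι → ZMod 2) (cols : ι → Fin N' → ZMod 2)
    (t : ℝ) :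
    colVec M' N' c d B (fun j => ∑ k, g k * cols k j) t
      = ∑ k, g k • colVec M' N' c d B (cols k) t := by
  simp only [colVec_eq_linearCombination, ← map_smul, ← map_sum]
  congr 1
  ext j
  simp

theorem ρ_colVec (col : Fin N' → ZMod 2) {s t : ℝ} (h : s ≤ t)
    (hcol : ∀ j, col j ≠ 0 → c j ≤ s) :
    M'.ρ s t h (colVec M' N' c d B col s) = colVec M' N' c d B col t := by
  rw [colVec, colVec, map_sum]
  refine Finset.sum_congr rfl fun j _ => ?_
  by_cases hj : col j = 0
  · simp [hj]
  have hcj := hcol j hj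
  by_cases hdt : t < d j
  · rw [dif_pos ⟨hcj, h.trans_lt hdt⟩, dif_pos ⟨hcj.trans h, hdt⟩, map_smul,
      B.compat j s t hcj h hdt]
  · rw [dif_neg (show ¬(c j ≤ t ∧ t < d j) from fun h' => hdt h'.2)]
    split_ifs with hs
    · rw [map_smul, B.dies j s hs.1 hs.2 t h (not_lt.1 hdt), smul_zero]
    · exact map_zero _

theorem linearIndependent_colVec {ι : Type*} [Fintype ι] (cols : ι → Fin N' → ZMod 2)
    (q : ι → Fin N') {t : ℝ} (hq : Function.Injective q)
    (halive : ∀ i, c (q i) ≤ t ∧ t < d (q i)) (hpiv : ∀ i, cols i (q i) ≠ 0)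
    (hzero : ∀ i j, q i < j → cols i j = 0) :
    LinearIndependent (ZMod 2) (fun i => colVec M' N' c d B (cols i) t) := by
  simp only [colVec_eq_linearCombination]
  refine LinearIndependent.map' (v := fun i (j : {j // c j ≤ t ∧ t < d j}) => cols i j) ?_ _
    (LinearMap.ker_eq_bot.2 (linearIndependent_iff_injective_fintypeLinearCombination.1
      (B.indep t)))
  exact linearIndependent_of_pivot _ (fun i => ⟨q i, halive i⟩)
    (fun i i' h => hq (congrArg Subtype.val h)) hpiv fun i j hj => hzero i j hj

end colVec

section map

variable {M M' : PersMod} {N N' : ℕ} {a b : Fin N → ℝ} {c d : Fin N' → ℝ}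
  (A : BarcodeBasis M N a b) (B : BarcodeBasis M' N' c d) (f : PersHom M M')
  {F : Matrix (Fin N') (Fin N) (ZMod 2)}

def PersHom.IsAssociatedMatrix (F : Matrix (Fin N') (Fin N) (ZMod 2)) : Prop :=
  ∀ (k : Fin N) (t : ℝ) (h1 : a k ≤ t) (h2 : t < b k),
    f.map t (A.vec k t h1 h2) = colVec M' N' c d B (fun j => F j k) t

theorem map_colVec
    (hF : f.IsAssociatedMatrix A B F)
    (hFb : ∀ k j, F j k ≠ 0 → d j ≤ b k) (x : Fin N → ZMod 2) {t : ℝ}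
    (hx : ∀ k, x k ≠ 0 → a k ≤ t) :
    f.map t (colVec M N a b A x t) = colVec M' N' c d B (fun j => ∑ k, x k * F j k) t := by
  classical
  have hterm : ∀ k, f.map t (if h : a k ≤ t ∧ t < b k then x k • A.vec k t h.1 h.2 else 0)
      = (if a k ≤ t ∧ t < b k then x k else 0) • colVec M' N' c d B (fun j => F j k) t := by
    intro k
    split_ifs with h
    · rw [map_smul, hF k t h.1 h.2]
    · rw [map_zero, zero_smul]
  rw [colVec, map_sum, Finset.sum_congr rfl fun k _ => hterm k, ← colVec_sum_mul]
  refine colVec_congr B fun j _ hdj => Finset.sum_congr rfl fun k _ => ?_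
  split_ifs with hk
  · rfl
  -- a generator of `A` that is born but already dead at `t` meets no `β_j` alive at `t`
  rw [zero_mul, eq_comm, mul_eq_zero]
  by_contra! hne
  exact hk ⟨hx k hne.1, hdj.trans_le (hFb k j hne.2)⟩

theorem colVec_mul_mem_range
    (hF : f.IsAssociatedMatrix A B F)
    (hFb : ∀ k j, F j k ≠ 0 → d j ≤ b k) (U : Matrix (Fin N) (Fin N) (ZMod 2)) (i : Fin N)
    {t : ℝ} (hU : ∀ k, U k i ≠ 0 → a k ≤ t) :
    colVec M' N' c d B (fun j => (F * U) j i) t ∈ LinearMap.range (f.map t) := by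
  refine ⟨colVec M N a b A (fun k => U k i) t, ?_⟩
  rw [map_colVec A B f hF hFb _ hU]
  simp only [Matrix.mul_apply, mul_comm]

theorem range_map_le_of_colVec_mem
    (hF : f.IsAssociatedMatrix A B F)
    {R : Matrix (Fin N') (Fin N) (ZMod 2)} {V : Matrix (Fin N) (Fin N) (ZMod 2)}
    (hV : V.IsUpperTriangular) (hFRV : F = R * V) (ha : Monotone a) {t : ℝ}
    {S : Submodule (ZMod 2) (M'.V t)}
    (hS : ∀ m, a m ≤ t → colVec M' N' c d B (fun j => R j m) t ∈ S) :
    LinearMap.range (f.map t) ≤ S := by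
  rw [LinearMap.range_eq_map, ← A.spans t, Submodule.map_span, Submodule.span_le]
  rintro _ ⟨_, ⟨k, rfl⟩, rfl⟩
  have hFk : (fun j => F j k) = fun j => ∑ m, V m k * R j m := by
    simp only [hFRV, Matrix.mul_apply, mul_comm]
  rw [SetLike.mem_coe]
  dsimp only
  rw [hF, hFk, colVec_sum_mul]
  refine Submodule.sum_mem _ fun m _ => ?_
  by_cases hVm : V m k = 0
  · rw [hVm, zero_smul]
    exact Submodule.zero_mem _
  · exact Submodule.smul_mem _ _ (hS m ((ha (hV.le_of_ne_zero hVm)).trans k.2.1))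

end map

theorem image_barcode_basis_of_column_reduction
    (M M' : PersMod) (N N' : ℕ) (a b : Fin N → ℝ) (c d : Fin N' → ℝ)
    (A : BarcodeBasis M N a b) (B : BarcodeBasis M' N' c d)
    (hstd : StdOrder a b) (hend : EndOrder c d)
    (f : PersHom M M') (F R : Matrix (Fin N') (Fin N) (ZMod 2))
    (hF : ∀ (i : Fin N) (t : ℝ) (h1 : a i ≤ t) (h2 : t < b i),
      f.map t (A.vec i t h1 h2) =
        ∑ j : Fin N', if h : c j ≤ t ∧ t < d j then F j i • B.vec j t h.1 h.2 else 0)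
    (hFmat : ∀ (i : Fin N) (j : Fin N'), F j i ≠ 0 → c j ≤ a i ∧ a i ≤ d j ∧ d j ≤ b i)
    (U : Matrix (Fin N) (Fin N) (ZMod 2))
    (hUdiag : ∀ i : Fin N, U i i = 1)
    (hUtri : ∀ i j : Fin N, j < i → U i j = 0)
    (hR : R = F * U)
    (p : Fin N → Fin N')
    (hpivot : ∀ i : Fin N, (∃ j, R j i ≠ 0) →
      R (p i) i ≠ 0 ∧ ∀ j : Fin N', p i < j → R j i = 0)
    (hreduced : ∀ i i' : Fin N, (∃ j, R j i ≠ 0) → (∃ j, R j i' ≠ 0) →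
      p i = p i' → i = i') :
    (∀ (i : Fin N) (t : ℝ), a i ≤ t → t < d (p i) →
      colVec M' N' c d B (fun j => R j i) t ∈ LinearMap.range (f.map t)) ∧
    (∀ (i : Fin N) (s t : ℝ) (h : s ≤ t), a i ≤ s → t < d (p i) →
      M'.ρ s t h (colVec M' N' c d B (fun j => R j i) s)
        = colVec M' N' c d B (fun j => R j i) t) ∧
    (∀ (i : Fin N) (s t : ℝ) (h : s ≤ t), a i ≤ s → s < d (p i) → d (p i) ≤ t →
      M'.ρ s t h (colVec M' N' c d B (fun j => R j i) s) = 0) ∧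
    (∀ t : ℝ,
      LinearIndependent (ZMod 2)
        (fun i : {i : Fin N // (∃ j, R j i ≠ 0) ∧ a i ≤ t ∧ t < d (p i)} =>
          colVec M' N' c d B (fun j => R j i.1) t) ∧
      Submodule.span (ZMod 2)
        (Set.range (fun i : {i : Fin N // (∃ j, R j i ≠ 0) ∧ a i ≤ t ∧ t < d (p i)} =>
          colVec M' N' c d B (fun j => R j i.1) t))
        = LinearMap.range (f.map t)) := by
  have hUt : U.IsUpperTriangular := fun i j h => hUtri i j h
  obtain ⟨V, hVt, hFRV⟩ := hUt.exists_eq_mul_of_eq_mul hUdiag hR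
  have hRc : ∀ i j, R j i ≠ 0 → c j ≤ a i := fun i j h => by
    obtain ⟨k, hFk, hUk⟩ := Matrix.exists_ne_zero_of_mul_apply_ne_zero (hR ▸ h)
    exact (hFmat k j hFk).1.trans (hstd.monotone (hUt.le_of_ne_zero hUk))
  have hRd : ∀ i j, R j i ≠ 0 → d j ≤ d (p i) := fun i j h =>
    hend.monotone (not_lt.1 fun hlt => h ((hpivot i ⟨j, h⟩).2 j hlt))
  have himg : ∀ i t, a i ≤ t →
      colVec M' N' c d B (fun j => R j i) t ∈ LinearMap.range (f.map t) := fun i t ht =>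
    hR ▸ colVec_mul_mem_range A B f hF (fun k j h => (hFmat k j h).2.2) U i
      fun k hk => (hstd.monotone (hUt.le_of_ne_zero hk)).trans ht
  have hρ : ∀ i s t (h : s ≤ t), a i ≤ s → M'.ρ s t h (colVec M' N' c d B (fun j => R j i) s)
      = colVec M' N' c d B (fun j => R j i) t := fun i s t h hs =>
    ρ_colVec B _ h fun j hj => (hRc i j hj).trans hs
  refine ⟨fun i t ht _ => himg i t ht, fun i s t h hs _ => hρ i s t h hs,
    fun i s t h hs _ hdt => (hρ i s t h hs).trans
      (colVec_eq_zero B fun j hj => (hRd i j hj).trans hdt), fun t => ⟨?_, ?_⟩⟩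
  · exact linearIndependent_colVec B _ (fun i => p i.1)
      (fun i i' h => Subtype.ext (hreduced _ _ i.2.1 i'.2.1 h))
      (fun i => ⟨(hRc _ _ (hpivot _ i.2.1).1).trans i.2.2.1, i.2.2.2⟩)
      (fun i => (hpivot _ i.2.1).1) fun i => (hpivot _ i.2.1).2
  refine le_antisymm (Submodule.span_le.2 (Set.range_subset_iff.2 fun i => himg i t i.2.2.1))
    (range_map_le_of_colVec_mem A B f hF hVt hFRV hstd.monotone fun m hm => ?_)
  by_cases halive : (∃ j, R j m ≠ 0) ∧ t < d (p m)
  · exact Submodule.subset_span ⟨⟨m, halive.1, hm, halive.2⟩, rfl⟩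
  rw [colVec_eq_zero B fun j hj => (hRd m j hj).trans (not_lt.1 fun ht => halive ⟨⟨j, hj⟩, ht⟩)]
  exact Submodule.zero_mem _
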